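/- Let A be a von Neumann algebra with center Z(A) ∩ B = ℂ for a subalgebra B, and let {p_i}_{i∈I} be a family of nonzero projections in A summing to 1. Fix o ∈ I and define inductively I_0 := {o}, and I_{n+1} := { i ∈ I ∖ (I_0 ∪ ⋯ ∪ I_n) : p(n) A p_i ≠ {0} } where p(n) := Σ_{s≤n} Σ_{i∈I_s} p_i. Then I = ⋃_{n≥0} I_n (a disjoint union). -/

import Mathlib

/-- The cumulative sets `cum n = I_0 ∪ ⋯ ∪ I_n` of the inductive construction:
`cum 0 = {o}` and `cum (n+1) = cum n ∪ {i | p(n) A p_i ≠ {0}}`, where the condition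
`p(n) A p_i ≠ {0}` (with `p(n) = Σ_{j ∈ cum n} p_j`) is expressed equivalently as
`∃ j ∈ cum n, p_j A p_i ≠ {0}` (the `p_j` being mutually orthogonal projections). -/
def statement7.cum {H : Type*} [NormedAddCommGroup H] [InnerProductSpace ℂ H]
    [CompleteSpace H] {ι : Type*} (Aset : Set (H →L[ℂ] H)) (p : ι → (H →L[ℂ] H))
    (o : ι) : ℕ → Set ι
  | 0 => {o}
  | n + 1 => statement7.cum Aset p o n ∪
      {i : ι | ∃ j ∈ statement7.cum Aset p o n, ∃ a ∈ Aset, p j * a * p i ≠ 0}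

/-! Let `S` be the set of indices reached from `o` and `K` the intersection of the kernels of the
`p j` with `j ∉ S`. Kernels of elements of a von Neumann algebra are invariant under its
commutant, so the projection `P` onto `K` lies in `A ∩ B`. Since `p j * a * p i = 0` for `i ∈ S`,
`j ∉ S`, `a ∈ A`, and every `x ∈ K` is the sum of its components `p i x` with `i ∈ S`, `K` is
invariant under `A`, so `P` is central in `A`, hence a scalar. As `K` contains the range of
`p o ≠ 0`, `P = 1`, and then `p j = 0` for every `j ∉ S`. -/

open ContinuousLinearMap Module.End VonNeumannAlgebra

namespace VonNeumannAlgebra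

variable {H : Type*} [NormedAddCommGroup H] [InnerProductSpace ℂ H] [CompleteSpace H]

theorem starProjection_mem_of_forall_mem_invtSubmodule (M : VonNeumannAlgebra H)
    (K : Submodule ℂ H) [K.HasOrthogonalProjection]
    (hK : ∀ y ∈ M.commutant, K ∈ invtSubmodule (y : H →ₗ[ℂ] H)) : K.starProjection ∈ M :=
  (IsStarProjection.mem_iff isStarProjection_starProjection M).2 <| by
    simpa [Submodule.range_starProjection] using hK

theorem starProjection_mem_commutant_of_forall_mem_invtSubmodule (M : VonNeumannAlgebra H)
    (K : Submodule ℂ H) [K.HasOrthogonalProjection]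
    (hK : ∀ a ∈ M, K ∈ invtSubmodule (a : H →ₗ[ℂ] H)) : K.starProjection ∈ M.commutant :=
  starProjection_mem_of_forall_mem_invtSubmodule _ K <| by simpa using hK

theorem iInf_ker_mem_invtSubmodule_of_mem_commutant {M : VonNeumannAlgebra H} {κ : Type*}
    {q : κ → H →L[ℂ] H} (hq : ∀ j, q j ∈ M) {y : H →L[ℂ] H} (hy : y ∈ M.commutant) :
    (⨅ j, (q j).ker) ∈ invtSubmodule (y : H →ₗ[ℂ] H) := by
  simp only [mem_invtSubmodule_iff_forall_mem_of_mem, Submodule.mem_iInf, LinearMap.mem_ker,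
    coe_coe]
  intro x hx j
  change (q j * y) x = 0
  rw [mem_commutant_iff.1 hy _ (hq j)]
  exact (congrArg y (hx j)).trans (map_zero y)

instance _root_.Submodule.hasOrthogonalProjection_iInf_ker {κ : Type*} (q : κ → H →L[ℂ] H) :
    (⨅ j, (q j).ker).HasOrthogonalProjection := by
  have : IsClosed ((⨅ j, (q j).ker : Submodule ℂ H) : Set H) := by
    simpa using isClosed_iInter fun j => (q j).isClosed_ker
  have := this.completeSpace_coe
  infer_instance

end VonNeumannAlgebra

theorem Submodule.eq_top_of_starProjection_eq_smul_one {𝕜 E : Type*} [RCLike 𝕜]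
    [NormedAddCommGroup E] [InnerProductSpace 𝕜 E] {K : Submodule 𝕜 E}
    [K.HasOrthogonalProjection] {c : 𝕜} (hc : K.starProjection = c • 1) (hK : K ≠ ⊥) : K = ⊤ := by
  obtain ⟨v, hv, hv0⟩ := K.ne_bot_iff.1 hK
  have hcv : c • v = v := by
    simpa [hc] using K.starProjection_eq_self_iff.2 hv
  have hc1 : c = 1 := smul_left_injective 𝕜 hv0 (by simpa using hcv)
  refine eq_top_iff.2 fun x _ => K.starProjection_eq_self_iff.1 ?_
  simp [hc, hc1]

theorem iInf_ker_mem_invtSubmodule_of_hasSum {ι R M : Type*} [Semiring R] [AddCommMonoid M]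
    [TopologicalSpace M] [T2Space M] [Module R M] {p : ι → M →L[R] M}
    (hsum : ∀ x, HasSum (fun i => p i x) x) {S : Set ι} {a : M →L[R] M}
    (ha : ∀ i ∈ S, ∀ j ∉ S, p j * a * p i = 0) :
    (⨅ j : ↥Sᶜ, (p j).ker) ∈ invtSubmodule (a : M →ₗ[R] M) := by
  simp only [mem_invtSubmodule_iff_forall_mem_of_mem, Submodule.mem_iInf, LinearMap.mem_ker,
    coe_coe]
  intro x hx j
  have hterm : ∀ i, p j (a (p i x)) = 0 := fun i => by
    by_cases hi : i ∈ S
    · exact congr($(ha i hi j j.2) x)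
    · rw [hx ⟨i, hi⟩, map_zero, map_zero]
  have := (hsum x).mapL (p j ∘L a)
  simp only [comp_apply, hterm] at this
  exact this.unique hasSum_zero

theorem statement7.mul_mul_eq_zero_of_mem_cum {H ι : Type*} [NormedAddCommGroup H]
    [InnerProductSpace ℂ H] [CompleteSpace H] {A : Set (H →L[ℂ] H)}
    (hA : ∀ a ∈ A, star a ∈ A) {p : ι → H →L[ℂ] H} (hp : ∀ i, IsSelfAdjoint (p i)) {o i j : ι}
    {n : ℕ} (hi : i ∈ statement7.cum A p o n) (hj : ∀ m, j ∉ statement7.cum A p o m)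
    {a : H →L[ℂ] H} (ha : a ∈ A) : p j * a * p i = 0 := by
  by_contra h
  refine hj (n + 1) (Or.inr ⟨i, hi, star a, hA a ha, fun h' => h ?_⟩)
  simpa [star_mul, (hp i).star_eq, (hp j).star_eq, mul_assoc] using congr(star $h')

/-- Let `A` be a von Neumann algebra and `B` a von Neumann subalgebra
with `Z(A) ∩ B = ℂ`, and let `{p_i}_{i∈I}` be a family of nonzero mutually orthogonal
projections of `A` (lying in `B`) summing to `1`.  Fix `o ∈ I` and define inductively
`I_0 = {o}` and `I_{n+1} = {i ∉ I_0 ∪ ⋯ ∪ I_n : p(n) A p_i ≠ {0}}` with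
`p(n) = Σ_{s≤n} Σ_{i∈I_s} p_i`.  Then `I = ⋃_{n≥0} I_n`, i.e. every index belongs to
some cumulative set `cum n = I_0 ∪ ⋯ ∪ I_n`. -/
theorem statement7
    {H : Type*} [NormedAddCommGroup H] [InnerProductSpace ℂ H] [CompleteSpace H]
    (A B : VonNeumannAlgebra H)
    (hZ : ∀ x : H →L[ℂ] H, x ∈ B → x ∈ A → (∀ a ∈ (A : Set (H →L[ℂ] H)), x * a = a * x) →
      ∃ c : ℂ, x = c • (1 : H →L[ℂ] H))
    {ι : Type*} (p : ι → (H →L[ℂ] H))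
    (hmemA : ∀ i, p i ∈ A) (hmemB : ∀ i, p i ∈ B)
    (hproj : ∀ i, IsSelfAdjoint (p i) ∧ p i * p i = p i)
    (hnz : ∀ i, p i ≠ 0)
    (horth : ∀ i j, i ≠ j → p i * p j = 0)
    (hsum : ∀ x : H, HasSum (fun i => p i x) x)
    (o : ι) :
    ∀ i : ι, ∃ n : ℕ, i ∈ statement7.cum (A : Set (H →L[ℂ] H)) p o n := by
  intro i₀
  by_contra! hi₀
  set S : Set ι := {i | ∃ n, i ∈ statement7.cum (A : Set (H →L[ℂ] H)) p o n}
  set K : Submodule ℂ H := ⨅ j : ↥Sᶜ, (p j).ker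
  have hKA : ∀ a ∈ A, K ∈ invtSubmodule (a : H →ₗ[ℂ] H) := fun a ha =>
    iInf_ker_mem_invtSubmodule_of_hasSum hsum fun i ⟨_, hi⟩ j hj =>
      statement7.mul_mul_eq_zero_of_mem_cum (fun _ => star_mem) (fun i => (hproj i).1) hi
        (fun m hm => hj ⟨m, hm⟩) ha
  have hPA : K.starProjection ∈ A := starProjection_mem_of_forall_mem_invtSubmodule A K
    fun _ hy => iInf_ker_mem_invtSubmodule_of_mem_commutant (q := fun j : ↥Sᶜ => p j)
      (fun j => hmemA j) hy
  have hPB : K.starProjection ∈ B := starProjection_mem_of_forall_mem_invtSubmodule B K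
    fun _ hy => iInf_ker_mem_invtSubmodule_of_mem_commutant (q := fun j : ↥Sᶜ => p j)
      (fun j => hmemB j) hy
  have hPZ := starProjection_mem_commutant_of_forall_mem_invtSubmodule A K hKA
  obtain ⟨c, hc⟩ := hZ _ hPB hPA fun a ha => (mem_commutant_iff.1 hPZ a ha).symm
  have hK_ne_bot : K ≠ ⊥ := by
    obtain ⟨x, hx⟩ : ∃ x, p o x ≠ 0 := by
      by_contra! h
      exact hnz o (ContinuousLinearMap.ext h)
    refine K.ne_bot_iff.2 ⟨p o x, (Submodule.mem_iInf _).2 fun j => ?_, hx⟩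
    have hjo : (j : ι) ≠ o := fun h => j.2 (h ▸ ⟨0, rfl⟩)
    exact congr($(horth _ _ hjo) x)
  have hK_top : K = ⊤ := Submodule.eq_top_of_starProjection_eq_smul_one hc hK_ne_bot
  refine hnz i₀ (ContinuousLinearMap.ext fun x => ?_)
  have hxK : x ∈ K := hK_top ▸ Submodule.mem_top
  exact (Submodule.mem_iInf _).1 hxK ⟨i₀, fun ⟨n, h⟩ => hi₀ n h⟩
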